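/- arXiv:1302.0892 — 2 statements merged into one kernel-verified Lean document; each statement's English description precedes it below -/
import Mathlib

section
/- Let k > 40 be a real number and let d₁, …, d_{N} be nonnegative reals with N = k/2 (assume N a positive integer, N ≥ k/2 ≥ 20). If ∑_{i=1}^N exp(−10·d_i/k) < 3, then ∑_{i=1}^N d_i > (k²/40)·ln k. -/
/-! Jensen's inequality for `exp`, with weights `1 / N = 2 / k`, turns `∑ exp (-10 dᵢ / k) < 3` into
`exp (-20 S / k²) < 6 / k` for `S = ∑ dᵢ`, i.e. `S > (k² / 20) log (k / 6)`; and
`2 log (k / 6) = log (k² / 36) > log k` as soon as `k > 36`. -/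

open Real Finset

theorem exp_sum_div_card_le_sum_exp_div_card {ι : Type*} [Fintype ι] [Nonempty ι] (x : ι → ℝ) :
    exp ((∑ i, x i) / Fintype.card ι) ≤ (∑ i, exp (x i)) / Fintype.card ι := by
  have hn : (0 : ℝ) < Fintype.card ι := by exact_mod_cast Fintype.card_pos
  have h := convexOn_exp.map_sum_le (t := univ) (w := fun _ => (Fintype.card ι : ℝ)⁻¹) (p := x)
    (fun _ _ => by positivity) (by simp [card_univ, hn.ne']) (fun _ _ => trivial)
  simpa only [smul_eq_mul, ← mul_sum, inv_mul_eq_div, sum_div] using h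

theorem card_div_mul_log_lt_sum_of_sum_exp_lt {ι : Type*} [Fintype ι] [Nonempty ι] {c B : ℝ}
    (hc : 0 < c) (d : ι → ℝ) (h : ∑ i, exp (-c * d i) < B) :
    Fintype.card ι / c * log (Fintype.card ι / B) < ∑ i, d i := by
  have hn : (0 : ℝ) < Fintype.card ι := by exact_mod_cast Fintype.card_pos
  set n : ℝ := (Fintype.card ι : ℝ)
  have hB : 0 < B := (sum_pos (fun i _ => exp_pos _) univ_nonempty).trans h
  have hexp : exp (-c * (∑ i, d i) / n) < B / n := by
    calc exp (-c * (∑ i, d i) / n) = exp ((∑ i, -c * d i) / n) := by rw [mul_sum]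
      _ ≤ (∑ i, exp (-c * d i)) / n := exp_sum_div_card_le_sum_exp_div_card _
      _ < B / n := div_lt_div_of_pos_right h hn
  have hlog : -c * (∑ i, d i) / n < log (B / n) := (lt_log_iff_exp_lt (by positivity)).2 hexp
  rw [log_div hB.ne' hn.ne'] at hlog
  rw [log_div hn.ne' hB.ne', div_mul_eq_mul_div, div_lt_iff₀ hc]
  rw [div_lt_iff₀ hn] at hlog
  linarith

theorem div_four_mul_log_lt_div_two_mul_log_div_six {k : ℝ} (hk : 36 < k) :
    k / 4 * log k < k / 2 * log (k / 6) := by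
  have hk0 : 0 < k := by linarith
  have hlog : log k < 2 * log (k / 6) := by
    rw [← log_rpow (by positivity), log_lt_log_iff hk0 (by positivity)]
    norm_num
    nlinarith
  nlinarith

theorem claim3_general (k : ℝ) (hk : 40 < k) (N : ℕ) (hNk : (N : ℝ) = k / 2)
    (d : Fin N → ℝ)
    (hsum : ∑ i, Real.exp (-10 * d i / k) < 3) :
    k ^ 2 / 40 * Real.log k < ∑ i, d i := by
  have hk0 : 0 < k := by linarith
  have : NeZero N := ⟨by rintro rfl; simp at hNk; linarith⟩
  have hsum' : ∑ i, exp (-(10 / k) * d i) < 3 := by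
    convert hsum using 3; ring
  have hbound := card_div_mul_log_lt_sum_of_sum_exp_lt (by positivity) d hsum'
  rw [Fintype.card_fin, hNk, show k / 2 / 3 = k / 6 by ring,
    show k / 2 / (10 / k) = k / 10 * (k / 2) by field_simp] at hbound
  have hmain := div_four_mul_log_lt_div_two_mul_log_div_six (by linarith : 36 < k)
  calc k ^ 2 / 40 * log k = k / 10 * (k / 4 * log k) := by ring
    _ < k / 10 * (k / 2 * log (k / 6)) := by gcongr
    _ = k / 10 * (k / 2) * log (k / 6) := by ring
    _ < ∑ i, d i := hbound

theorem claim3 (k : ℝ) (hk : 40 < k) (N : ℕ) (hN : 0 < N) (hNk : (N : ℝ) = k / 2)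
    (d : Fin N → ℝ) (hd : ∀ i, 0 ≤ d i)
    (hsum : ∑ i, Real.exp (-10 * d i / k) < 3) :
    k ^ 2 / 40 * Real.log k < ∑ i, d i :=
  claim3_general k hk N hNk d hsum
end

section
/- If p, q ∈ (0,1) with |p − q| ≤ 1/k and 1/4 ≤ p ≤ 3/4 and k ≥ 8, then D_KL(B_q || B_p) ≤ (32/(3·ln 2))·(1/k²). -/
/-! Termwise `log x ≤ x - 1` bounds the KL divergence (in nats) by the χ²-divergence
`(q - p)² / (p (1 - p))`, and for `p ∈ [1/4, 3/4]` the denominator is at least `3/16`. -/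

/-- KL divergence between Bernoulli(q) and Bernoulli(p), in bits. -/
noncomputable def bernoulliKL (q p : ℝ) : ℝ :=
  q * Real.logb 2 (q / p) + (1 - q) * Real.logb 2 ((1 - q) / (1 - p))

open Real

lemma mul_log_div_le {a b : ℝ} (ha : 0 ≤ a) (hb : 0 < b) :
    a * log (a / b) ≤ a * (a / b - 1) := by
  rcases ha.eq_or_lt with rfl | ha
  · simp
  · exact mul_le_mul_of_nonneg_left (log_le_sub_one_of_pos (by positivity)) ha.le

lemma bernoulliKL_le_sq_sub_div {p q : ℝ} (hq0 : 0 ≤ q) (hq1 : q ≤ 1) (hp0 : 0 < p)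
    (hp1 : p < 1) : bernoulliKL q p ≤ (q - p) ^ 2 / (p * (1 - p)) / log 2 := by
  have hp1' : 0 < 1 - p := by linarith
  have hnats : q * log (q / p) + (1 - q) * log ((1 - q) / (1 - p)) ≤
      (q - p) ^ 2 / (p * (1 - p)) :=
    calc q * log (q / p) + (1 - q) * log ((1 - q) / (1 - p))
        ≤ q * (q / p - 1) + (1 - q) * ((1 - q) / (1 - p) - 1) :=
          add_le_add (mul_log_div_le hq0 hp0) (mul_log_div_le (by linarith) hp1')
      _ = (q - p) ^ 2 / (p * (1 - p)) := by field_simp; ring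
  rw [bernoulliKL, logb, logb, ← mul_div_assoc, ← mul_div_assoc, ← add_div]
  exact div_le_div_of_nonneg_right hnats (log_pos one_lt_two).le

theorem kl_close_bound_general (p q k : ℝ)
    (hq0 : 0 < q) (hq1 : q < 1) (hp0 : 0 < p) (hp1 : p < 1)
    (hpq : |p - q| ≤ 1 / k) (hp14 : 1/4 ≤ p) (hp34 : p ≤ 3/4) :
    bernoulliKL q p ≤ (32 / (3 * Real.log 2)) * (1 / k ^ 2) := by
  have hsq : (q - p) ^ 2 ≤ 1 / k ^ 2 := by
    rw [← sq_abs, abs_sub_comm, ← one_div_pow]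
    exact pow_le_pow_left₀ (abs_nonneg _) hpq 2
  have hvar : 3 / 16 ≤ p * (1 - p) := by nlinarith
  have hlog2 : 0 < log 2 := log_pos one_lt_two
  calc bernoulliKL q p ≤ (q - p) ^ 2 / (p * (1 - p)) / log 2 :=
        bernoulliKL_le_sq_sub_div hq0.le hq1.le hp0 hp1
    _ ≤ 1 / k ^ 2 / (3 / 16) / log 2 := by gcongr
    _ = 16 / (3 * log 2) * (1 / k ^ 2) := by ring
    _ ≤ 32 / (3 * log 2) * (1 / k ^ 2) := by gcongr; norm_num

theorem kl_close_bound (p q k : ℝ) (hk : 8 ≤ k)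
    (hq0 : 0 < q) (hq1 : q < 1) (hp0 : 0 < p) (hp1 : p < 1)
    (hpq : |p - q| ≤ 1 / k) (hp14 : 1/4 ≤ p) (hp34 : p ≤ 3/4) :
    bernoulliKL q p ≤ (32 / (3 * Real.log 2)) * (1 / k ^ 2) :=
  kl_close_bound_general p q k hq0 hq1 hp0 hp1 hpq hp14 hp34
end
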